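/- Let B be a nonconstant polynomial over ℂ, let k ≥ 1 be an integer, and let P be a polynomial over ℂ whose formal derivative satisfies P' = B^k. Suppose the roots z₁, …, zₙ of P (with n = k·deg B + 1) are pairwise distinct, so P = c·∏_{j=1}^n (X − zⱼ) for some constant c ≠ 0, and suppose B(zⱼ) ≠ 0 for every j. Then the points z₁, …, zₙ satisfy the Stieltjes–Bethe equations with A = k·B': for every j, Σ_{ℓ ≠ j} 1/(zⱼ − z_ℓ) = k·B'(zⱼ)/(2·B(zⱼ)). -/

import Mathlib

open Polynomial Finset

/-!
Write `P = c (X - z_j) r`. At the simple root `z_j` one has `P'(z_j) = c r(z_j)` and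
`P''(z_j) = 2 c r'(z_j)`, so `∑_{ℓ ≠ j} 1/(z_j - z_ℓ) = r'/r (z_j) = P''/(2P') (z_j)`.
Since `P' = B^k`, the logarithmic derivative `P''/P'` equals `k B'/B`.
-/

section LogDeriv

variable {K : Type*} [Field K]

theorem eval_derivative_prod_X_sub_C_div_eval {ι : Type*} [DecidableEq ι] (s : Finset ι)
    (v : ι → K) {a : K} (h : (∏ i ∈ s, (X - C (v i))).eval a ≠ 0) :
    (derivative (∏ i ∈ s, (X - C (v i)))).eval a / (∏ i ∈ s, (X - C (v i))).eval a =
      ∑ i ∈ s, 1 / (a - v i) := by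
  induction s using Finset.induction_on with
  | empty => simp
  | insert i s hi ih =>
    rw [prod_insert hi, eval_mul] at h
    obtain ⟨hai, hs⟩ := mul_ne_zero_iff.mp h
    rw [prod_insert hi, sum_insert hi, derivative_mul, ← ih hs]
    simp only [eval_add, eval_mul, derivative_sub, derivative_X, derivative_C, sub_zero,
      one_mul, eval_sub, eval_X, eval_C] at hai ⊢
    field_simp

theorem eval_derivative_pow_div_eval_pow (p : K[X]) (k : ℕ) {a : K} (h : p.eval a ≠ 0) :
    (derivative (p ^ k)).eval a / (p ^ k).eval a = k * (derivative p).eval a / p.eval a := by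
  rw [derivative_pow]
  rcases k with _ | k
  · simp
  · simp only [eval_mul, eval_pow, eval_C, Nat.add_sub_cancel]
    field_simp
    ring

end LogDeriv

section SimpleRoot

variable {R : Type*} [CommRing R] (q : R[X]) (a : R)

theorem derivative_X_sub_C_mul :
    derivative ((X - C a) * q) = q + (X - C a) * derivative q := by
  simp [derivative_mul]

theorem eval_derivative_X_sub_C_mul_self : (derivative ((X - C a) * q)).eval a = q.eval a := by
  simp

theorem eval_derivative_derivative_X_sub_C_mul_self :
    (derivative (derivative ((X - C a) * q))).eval a = 2 * (derivative q).eval a := by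
  rw [derivative_X_sub_C_mul, derivative_add, derivative_X_sub_C_mul]
  simp only [eval_add, eval_mul, eval_sub, eval_X, eval_C, sub_self, zero_mul, add_zero]
  ring

end SimpleRoot

theorem stieltjes_bethe_family_for_A_eq_kB'_general
    (B : Polynomial ℂ)
    (k : ℕ)
    (P : Polynomial ℂ) (hP' : derivative P = B ^ k)
    (n : ℕ)
    (z : Fin n → ℂ)
    (c : ℂ)
    (hPfac : P = C c * ∏ j, (X - C (z j)))
    (hBz : ∀ j, B.eval (z j) ≠ 0) :
    ∀ j, ∑ ℓ ∈ univ.erase j, 1 / (z j - z ℓ) =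
      (k : ℂ) * (derivative B).eval (z j) / (2 * B.eval (z j)) := by
  intro j
  set r := ∏ ℓ ∈ univ.erase j, (X - C (z ℓ))
  have hPr : P = C c * ((X - C (z j)) * r) := by
    rw [hPfac, mul_prod_erase univ (fun i => X - C (z i)) (mem_univ j)]
  have hBk : (B ^ k).eval (z j) = c * r.eval (z j) := by
    rw [← hP', hPr, derivative_C_mul, eval_mul, eval_C, eval_derivative_X_sub_C_mul_self]
  have hBk' : (derivative (B ^ k)).eval (z j) = c * (2 * (derivative r).eval (z j)) := by
    rw [← hP', hPr, derivative_C_mul, derivative_C_mul, eval_mul, eval_C,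
      eval_derivative_derivative_X_sub_C_mul_self]
  have hcr : c * r.eval (z j) ≠ 0 := by
    rw [← hBk, eval_pow]
    exact pow_ne_zero k (hBz j)
  calc ∑ ℓ ∈ univ.erase j, 1 / (z j - z ℓ) = (derivative r).eval (z j) / r.eval (z j) :=
        (eval_derivative_prod_X_sub_C_div_eval _ _ (right_ne_zero_of_mul hcr)).symm
    _ = (derivative (B ^ k)).eval (z j) / (B ^ k).eval (z j) / 2 := by
        rw [hBk, hBk']
        field_simp [left_ne_zero_of_mul hcr]
    _ = (k : ℂ) * (derivative B).eval (z j) / (2 * B.eval (z j)) := by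
        rw [eval_derivative_pow_div_eval_pow _ _ (hBz j), div_div, mul_comm (B.eval _)]

/-- If `P' = B^k` (with `B` nonconstant, `k ≥ 1`) and the
`n = k·deg B + 1` roots `z₁, …, zₙ` of `P` are pairwise distinct and avoid the roots
of `B`, then they satisfy the Stieltjes–Bethe equations with `A = k·B'`. -/
theorem stieltjes_bethe_family_for_A_eq_kB'
    (B : Polynomial ℂ) (hBdeg : 0 < B.natDegree)
    (k : ℕ) (hk : 1 ≤ k)
    (P : Polynomial ℂ) (hP' : derivative P = B ^ k)
    (n : ℕ) (hn : n = k * B.natDegree + 1)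
    (z : Fin n → ℂ) (hz : Function.Injective z)
    (c : ℂ) (hc : c ≠ 0)
    (hPfac : P = C c * ∏ j, (X - C (z j)))
    (hBz : ∀ j, B.eval (z j) ≠ 0) :
    ∀ j, ∑ ℓ ∈ univ.erase j, 1 / (z j - z ℓ) =
      (k : ℂ) * (derivative B).eval (z j) / (2 * B.eval (z j)) :=
  stieltjes_bethe_family_for_A_eq_kB'_general B k P hP' n z c hPfac hBz
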